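/- arXiv:2011.01013 — 3 statements merged into one kernel-verified Lean document; each statement's English description precedes it below -/
import Mathlib

section
/- Let y* > 0 and set ω₀ = 1/y*. Suppose ρ, ω are real-analytic functions on a neighborhood of z = 1 that solve the multiplied system there and satisfy ρ(1) = ω(1) = ω₀. Then the pair of first derivatives (ρ'(1), ω'(1)) satisfies: either ρ'(1) = −ω₀ or ω'(1) = 0; in the case ρ'(1) = −ω₀ one has ω'(1) = 1 − 2ω₀ or ω'(1) = −ω₀, and in the case ω'(1) = 0 one has ρ'(1) = 1 − 3ω₀. In particular (ρ'(1), ω'(1)) ∈ {(−ω₀, 1−2ω₀), (−ω₀, −ω₀), (1−3ω₀, 0)}. -/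
/-- The multiplied form of the rescaled self-similar isothermal Euler–Poisson system
with parameter `y = y*`, at the point `z`. -/
def MultSys (y : ℝ) (ρ ω : ℝ → ℝ) (z : ℝ) : Prop :=
  deriv ρ z * (1 - y ^ 2 * z ^ 2 * (ω z) ^ 2)
    + 2 * y ^ 2 * z * ω z * ρ z * (ρ z - ω z) = 0 ∧
  z * deriv ω z * (1 - y ^ 2 * z ^ 2 * (ω z) ^ 2)
    - (1 - 3 * ω z) * (1 - y ^ 2 * z ^ 2 * (ω z) ^ 2)
    - 2 * y ^ 2 * z ^ 2 * (ω z) ^ 2 * (ρ z - ω z) = 0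

/-!
At the sonic point `z = 1` the factor `1 - y² z² ω²` vanishes (because `y ω₀ = 1`), and so does
`ρ - ω`. Differentiating both equations once at `z = 1`, every term in which such a factor is
not differentiated drops out; in particular no second derivatives survive. What remains are two
quadratic relations between `a = ρ'(1)` and `b = ω'(1)`,
`b (a + ω₀) = 0` and `(b - 1 + 3ω₀)(b + ω₀) + ω₀ (a - b) = 0`,
whose solutions are exactly the three branches.
-/

open Filter Topology

section Calculus

variable {𝕜 : Type*} [NontriviallyNormedField 𝕜] {f g : 𝕜 → 𝕜} {f' g' x : 𝕜}

theorem DifferentiableAt.hasDerivAt_mul_of_right_eq_zero (hf : DifferentiableAt 𝕜 f x)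
    (hg : HasDerivAt g g' x) (hg0 : g x = 0) : HasDerivAt (fun z => f z * g z) (f x * g') x := by
  simpa [hg0] using hf.hasDerivAt.fun_mul hg

theorem HasDerivAt.eq_zero_of_eventuallyEq_zero (hf : HasDerivAt f f' x)
    (h : f =ᶠ[𝓝 x] fun _ => 0) : f' = 0 :=
  hf.unique ((hasDerivAt_const x 0).congr_of_eventuallyEq h)

end Calculus

def sonicFactor (y : ℝ) (ω : ℝ → ℝ) (z : ℝ) : ℝ := 1 - y ^ 2 * z ^ 2 * ω z ^ 2

section SonicPoint

variable {y ω₀ a b : ℝ} {ρ ω : ℝ → ℝ}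

theorem sonicFactor_one_eq_zero (hyω : y * ω₀ = 1) (hω1 : ω 1 = ω₀) : sonicFactor y ω 1 = 0 := by
  simp only [sonicFactor, hω1]
  linear_combination (-(1 + y * ω₀)) * hyω

theorem hasDerivAt_sonicFactor (hyω : y * ω₀ = 1) (hω : HasDerivAt ω b 1) (hω1 : ω 1 = ω₀) :
    HasDerivAt (sonicFactor y ω) (-2 * y * (b + ω₀)) 1 := by
  have h := (((hasDerivAt_pow 2 (1 : ℝ)).const_mul (y ^ 2)).mul (hω.fun_pow 2)).const_sub 1
  refine h.congr_deriv ?_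
  simp only [hω1]
  linear_combination (-2 * y * (ω₀ + b)) * hyω

theorem hasDerivAt_first_equation_at_sonic (hyω : y * ω₀ = 1) (hρ : HasDerivAt ρ a 1)
    (hω : HasDerivAt ω b 1) (hρ' : DifferentiableAt ℝ (deriv ρ) 1) (hρ1 : ρ 1 = ω₀)
    (hω1 : ω 1 = ω₀) :
    HasDerivAt (fun z => deriv ρ z * sonicFactor y ω z + 2 * y ^ 2 * z * ω z * ρ z * (ρ z - ω z))
      (-2 * y * (b * (a + ω₀))) 1 := by
  have hcoef : DifferentiableAt ℝ (fun z => 2 * y ^ 2 * z * ω z * ρ z) 1 := by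
    have := hω.differentiableAt; have := hρ.differentiableAt; fun_prop
  have h := (hρ'.hasDerivAt_mul_of_right_eq_zero (hasDerivAt_sonicFactor hyω hω hω1)
    (sonicFactor_one_eq_zero hyω hω1)).add
    (hcoef.hasDerivAt_mul_of_right_eq_zero (hρ.sub hω) (by simp [hρ1, hω1]))
  refine h.congr_deriv ?_
  simp only [hρ.deriv, hρ1, hω1]
  linear_combination (2 * (a - b) * y * ω₀) * hyω

theorem hasDerivAt_second_equation_at_sonic (hyω : y * ω₀ = 1) (hρ : HasDerivAt ρ a 1)
    (hω : HasDerivAt ω b 1) (hω' : DifferentiableAt ℝ (deriv ω) 1) (hρ1 : ρ 1 = ω₀)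
    (hω1 : ω 1 = ω₀) :
    HasDerivAt (fun z => z * deriv ω z * sonicFactor y ω z - (1 - 3 * ω z) * sonicFactor y ω z
        - 2 * y ^ 2 * z ^ 2 * ω z ^ 2 * (ρ z - ω z))
      (-2 * y * ((b - 1 + 3 * ω₀) * (b + ω₀) + ω₀ * (a - b))) 1 := by
  have hP := hasDerivAt_sonicFactor hyω hω hω1
  have hP1 := sonicFactor_one_eq_zero hyω hω1
  have hlin : DifferentiableAt ℝ (fun z => z * deriv ω z) 1 := by fun_prop
  have hconst : DifferentiableAt ℝ (fun z => 1 - 3 * ω z) 1 := by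
    have := hω.differentiableAt; fun_prop
  have hcoef : DifferentiableAt ℝ (fun z => 2 * y ^ 2 * z ^ 2 * ω z ^ 2) 1 := by
    have := hω.differentiableAt; fun_prop
  have h := ((hlin.hasDerivAt_mul_of_right_eq_zero hP hP1).sub
    (hconst.hasDerivAt_mul_of_right_eq_zero hP hP1)).sub
    (hcoef.hasDerivAt_mul_of_right_eq_zero (hρ.sub hω) (by simp [hρ1, hω1]))
  refine h.congr_deriv ?_
  simp only [hω.deriv, hω1]
  linear_combination (-2 * (a - b) * y * ω₀) * hyω

end SonicPoint

theorem sonic_branches_of_relations {ω₀ a b : ℝ} (hω₀ : ω₀ ≠ 0) (h₁ : b * (a + ω₀) = 0)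
    (h₂ : (b - 1 + 3 * ω₀) * (b + ω₀) + ω₀ * (a - b) = 0) :
    (a = -ω₀ ∨ b = 0) ∧
    (a = -ω₀ → b = 1 - 2 * ω₀ ∨ b = -ω₀) ∧
    (b = 0 → a = 1 - 3 * ω₀) ∧
    ((a = -ω₀ ∧ b = 1 - 2 * ω₀) ∨ (a = -ω₀ ∧ b = -ω₀) ∨ (a = 1 - 3 * ω₀ ∧ b = 0)) := by
  have hsplit : a = -ω₀ ∨ b = 0 := by
    rcases mul_eq_zero.1 h₁ with hb | ha
    · exact .inr hb
    · exact .inl (by linarith)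
  have hLP : a = -ω₀ → b = 1 - 2 * ω₀ ∨ b = -ω₀ := fun ha => by
    have hfac : (b + ω₀) * (b - (1 - 2 * ω₀)) = 0 := by linear_combination h₂ - ω₀ * ha
    rcases mul_eq_zero.1 hfac with hb | hb
    · exact .inr (by linarith)
    · exact .inl (by linarith)
  have hHunter : b = 0 → a = 1 - 3 * ω₀ := fun hb => by
    have hfac : ω₀ * (a - (1 - 3 * ω₀)) = 0 := by linear_combination h₂ + (1 - b - 3 * ω₀) * hb
    linarith [(mul_eq_zero.1 hfac).resolve_left hω₀]
  refine ⟨hsplit, hLP, hHunter, ?_⟩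
  rcases hsplit with ha | hb
  · rcases hLP ha with hb | hb
    · exact .inl ⟨ha, hb⟩
    · exact .inr (.inl ⟨ha, hb⟩)
  · exact .inr (.inr ⟨hHunter hb, hb⟩)

/-- Classification of the possible first Taylor coefficients at the sonic point `z = 1`:
the Larson–Penston branch, the trivial branch, and the Hunter branch. -/
theorem first_order_coefficients_at_sonic_point
    (y : ℝ) (hy : 0 < y) (ω₀ : ℝ) (hω₀ : ω₀ = 1 / y)
    (ρ ω : ℝ → ℝ) (ε : ℝ) (hε : 0 < ε)
    (hρa : AnalyticOnNhd ℝ ρ (Metric.ball 1 ε))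
    (hωa : AnalyticOnNhd ℝ ω (Metric.ball 1 ε))
    (hsol : ∀ z ∈ Metric.ball (1 : ℝ) ε, MultSys y ρ ω z)
    (hρ1 : ρ 1 = ω₀) (hω1 : ω 1 = ω₀) :
    (deriv ρ 1 = -ω₀ ∨ deriv ω 1 = 0) ∧
    (deriv ρ 1 = -ω₀ → deriv ω 1 = 1 - 2 * ω₀ ∨ deriv ω 1 = -ω₀) ∧
    (deriv ω 1 = 0 → deriv ρ 1 = 1 - 3 * ω₀) ∧
    ((deriv ρ 1 = -ω₀ ∧ deriv ω 1 = 1 - 2 * ω₀) ∨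
     (deriv ρ 1 = -ω₀ ∧ deriv ω 1 = -ω₀) ∨
     (deriv ρ 1 = 1 - 3 * ω₀ ∧ deriv ω 1 = 0)) := by
  have hmem : (1 : ℝ) ∈ Metric.ball 1 ε := Metric.mem_ball_self hε
  have hyω : y * ω₀ = 1 := by rw [hω₀, mul_one_div_cancel hy.ne']
  have hsys : ∀ᶠ z in 𝓝 1, MultSys y ρ ω z :=
    eventually_of_mem (Metric.isOpen_ball.mem_nhds hmem) hsol
  have hρ := (hρa 1 hmem).differentiableAt.hasDerivAt
  have hω := (hωa 1 hmem).differentiableAt.hasDerivAt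
  have h₁ := (hasDerivAt_first_equation_at_sonic hyω hρ hω (hρa.deriv 1 hmem).differentiableAt
    hρ1 hω1).eq_zero_of_eventuallyEq_zero (hsys.mono fun _ hz => hz.1)
  have h₂ := (hasDerivAt_second_equation_at_sonic hyω hρ hω (hωa.deriv 1 hmem).differentiableAt
    hρ1 hω1).eq_zero_of_eventuallyEq_zero (hsys.mono fun _ hz => hz.2)
  have hy₂ : -2 * y ≠ 0 := mul_ne_zero (by norm_num) hy.ne'
  exact sonic_branches_of_relations (right_ne_zero_of_mul_eq_one hyω)
    ((mul_eq_zero.1 h₁).resolve_left hy₂) ((mul_eq_zero.1 h₂).resolve_left hy₂)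
end

section
/- Fix y* > 0, set ω₀ = 1/y*, and let N ≥ 2 be an integer. Define the 2×2 real matrix A_N^{LP} with entries a₁₁ = −2N + 2 − 2N(1−2ω₀)/ω₀, a₁₂ = −2(−ω₀)/ω₀ − 2 (which equals 0), a₂₁ = −2, a₂₂ = −2N − 4 + 2/ω₀ − (2N+2)(1−2ω₀)/ω₀. Then det A_N^{LP} = 4N·(1 − 1/ω₀)·(N(1 − 1/ω₀) + 1); the matrix A_N^{LP} is singular if and only if y* = 1 or y* = (N+1)/N; and consequently A_N^{LP} is invertible for every y* > 3/2 and every integer N ≥ 2. -/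
/-!
With `ρ₁ = -ω₀` the off-diagonal entry `a₁₂` vanishes, so `A_N^{LP}` is lower triangular and,
writing `y = 1/ω₀`, its determinant factors as `4N(1 - y)(N(1 - y) + 1)`. For `y > 3/2` and
`N ≥ 2` both `1 - y` and `N(1 - y) + 1 ≤ 2(1 - y) + 1` are negative, so the determinant is positive.
-/

theorem det_lp_matrix (N ω₀ : ℝ) (hω₀ : ω₀ ≠ 0) :
    (!![-2 * N + 2 - 2 * N * (1 - 2 * ω₀) / ω₀, -2 * (-ω₀) / ω₀ - 2;
        -2, -2 * N - 4 + 2 / ω₀ - (2 * N + 2) * (1 - 2 * ω₀) / ω₀] : Matrix (Fin 2) (Fin 2) ℝ).det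
      = 4 * N * (1 - 1 / ω₀) * (N * (1 - 1 / ω₀) + 1) := by
  rw [Matrix.det_fin_two_of]
  field_simp
  ring

theorem lp_det_eq_zero_iff {N : ℝ} (hN : N ≠ 0) (y : ℝ) :
    4 * N * (1 - y) * (N * (1 - y) + 1) = 0 ↔ y = 1 ∨ y = (N + 1) / N := by
  rw [eq_div_iff hN]
  simp only [mul_eq_zero, hN, or_false, OfNat.ofNat_ne_zero, false_or, sub_eq_zero]
  exact or_congr eq_comm ⟨fun h => by linarith, fun h => by linarith⟩

theorem lp_det_pos {N y : ℝ} (hN : 2 ≤ N) (hy : 3 / 2 < y) :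
    0 < 4 * N * (1 - y) * (N * (1 - y) + 1) := by
  have h_sonic : 1 - y < 0 := by linarith
  have h_second : N * (1 - y) + 1 < 0 := by nlinarith
  have h_first : 4 * N * (1 - y) < 0 := by nlinarith
  exact mul_pos_of_neg_of_neg h_first h_second

/-- Properties of the matrix `A_N^{LP}` appearing in the Taylor-coefficient recursion
for Larson–Penston-type solutions at the sonic point. -/
theorem lp_matrix_invertibility
    (y : ℝ) (hy : 0 < y) (N : ℕ) (hN : 2 ≤ N)
    (ω₀ : ℝ) (hω₀ : ω₀ = 1 / y)
    (A : Matrix (Fin 2) (Fin 2) ℝ)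
    (hA : A = !![-2 * (N : ℝ) + 2 - 2 * (N : ℝ) * (1 - 2 * ω₀) / ω₀,
                 -2 * (-ω₀) / ω₀ - 2;
                 -2,
                 -2 * (N : ℝ) - 4 + 2 / ω₀ - (2 * (N : ℝ) + 2) * (1 - 2 * ω₀) / ω₀]) :
    A.det = 4 * (N : ℝ) * (1 - 1 / ω₀) * ((N : ℝ) * (1 - 1 / ω₀) + 1) ∧
    (A.det = 0 ↔ y = 1 ∨ y = ((N : ℝ) + 1) / (N : ℝ)) ∧
    (3 / 2 < y → IsUnit A) := by
  have hω₀_ne : ω₀ ≠ 0 := by rw [hω₀]; positivity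
  have hy_eq : 1 / ω₀ = y := by rw [hω₀, one_div_one_div]
  have hdet := hA ▸ det_lp_matrix N ω₀ hω₀_ne
  refine ⟨hdet, ?_, fun hy_gt => ?_⟩
  · rw [hdet, hy_eq]
    exact lp_det_eq_zero_iff (by positivity) y
  · rw [Matrix.isUnit_iff_isUnit_det, isUnit_iff_ne_zero, hdet, hy_eq]
    exact (lp_det_pos (by exact_mod_cast hN) hy_gt).ne'
end

section
/- Let y* ∈ [2,3] and let (ρ, ω) be real-analytic functions on (1−r, 1+r), r ∈ (0,1), solving the multiplied system there with the LP conditions. Then there exists δ ∈ (0, r) such that for every z ∈ (1, 1+δ): ρ'(z) < 0; ω'(z) > 0; 1/3 < ω(z) < 1; −2ρ(z)/z < ρ'(z) < −ρ(z)/z; ω(z) > 1/(y*·z); ρ(z) < 1/(y*·z); and ρ(z)·ω(z) > 1/(y*·z)². -/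
/-- The Larson–Penston conditions at the sonic point `z = 1`. -/
def LPConds (y : ℝ) (ρ ω : ℝ → ℝ) : Prop :=
  ρ 1 = 1 / y ∧ ω 1 = 1 / y ∧ deriv ρ 1 = -(1 / y) ∧ deriv ω 1 = 1 - 2 / y

open Set Filter Topology

/-!
At the sonic point `z = 1` the factor `1 - y²z²ω²` of the multiplied system vanishes, so the
LP conditions fix only first derivatives there. Differentiating both equations twice at `z = 1`
gives `ρ''(1) y (3 - 2y) = y² - 6y + 7` and a linear relation for `ω''(1)`.

Every claimed inequality is either strict at `z = 1`, and persists by continuity, or an equality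
there whose difference has a first derivative of the right sign. Second-order information enters
twice: `(zρ)' = ρ + zρ'` vanishes at `1` with derivative `ρ''(1) - 2/y`, which is negative because
`(ρ''(1) y - 2)(2y - 3) = -(y - 1)²`; so `zρ` decreases to the right of `1`, i.e. `ρ < 1/(yz)`.
And for `y = 2`, where `ω'(1) = 0`, one finds `ω''(1) = 1/2`.
-/

/-- Unlike with `iteratedDeriv`, the Leibniz rules below compute the second derivative of an
expression in `f, f', …` without its first derivative ever being written out. -/
def HasSecondDerivAt {𝕜 : Type*} [NontriviallyNormedField 𝕜] (f : 𝕜 → 𝕜) (f₁ f₂ x : 𝕜) :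
    Prop :=
  ∃ f' : 𝕜 → 𝕜, (∀ᶠ z in 𝓝 x, HasDerivAt f (f' z) z) ∧ f' x = f₁ ∧ HasDerivAt f' f₂ x

section SecondDeriv

variable {𝕜 : Type*} [NontriviallyNormedField 𝕜] {f g : 𝕜 → 𝕜} {f₁ f₂ g₁ g₂ x : 𝕜}

theorem hasSecondDerivAt_const (c x : 𝕜) : HasSecondDerivAt (fun _ => c) 0 0 x :=
  ⟨fun _ => 0, Eventually.of_forall fun z => hasDerivAt_const z c, rfl, hasDerivAt_const x 0⟩

theorem hasSecondDerivAt_id (x : 𝕜) : HasSecondDerivAt (fun z => z) 1 0 x :=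
  ⟨fun _ => 1, Eventually.of_forall fun z => hasDerivAt_id' z, rfl, hasDerivAt_const x 1⟩

theorem AnalyticAt.hasSecondDerivAt [CompleteSpace 𝕜] (hf : AnalyticAt 𝕜 f x) :
    HasSecondDerivAt f (deriv f x) (deriv (deriv f) x) x :=
  ⟨deriv f, hf.eventually_analyticAt.mono fun _ h => h.differentiableAt.hasDerivAt, rfl,
    hf.deriv.differentiableAt.hasDerivAt⟩

namespace HasSecondDerivAt

theorem add (hf : HasSecondDerivAt f f₁ f₂ x) (hg : HasSecondDerivAt g g₁ g₂ x) :
    HasSecondDerivAt (fun z => f z + g z) (f₁ + g₁) (f₂ + g₂) x := by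
  obtain ⟨f', hf', rfl, hf''⟩ := hf
  obtain ⟨g', hg', rfl, hg''⟩ := hg
  exact ⟨fun z => f' z + g' z, (hf'.and hg').mono fun z h => h.1.add h.2, rfl, hf''.add hg''⟩

theorem sub (hf : HasSecondDerivAt f f₁ f₂ x) (hg : HasSecondDerivAt g g₁ g₂ x) :
    HasSecondDerivAt (fun z => f z - g z) (f₁ - g₁) (f₂ - g₂) x := by
  obtain ⟨f', hf', rfl, hf''⟩ := hf
  obtain ⟨g', hg', rfl, hg''⟩ := hg
  exact ⟨fun z => f' z - g' z, (hf'.and hg').mono fun z h => h.1.sub h.2, rfl, hf''.sub hg''⟩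

theorem mul (hf : HasSecondDerivAt f f₁ f₂ x) (hg : HasSecondDerivAt g g₁ g₂ x) :
    HasSecondDerivAt (fun z => f z * g z) (f₁ * g x + f x * g₁)
      (f₂ * g x + 2 * f₁ * g₁ + f x * g₂) x := by
  obtain ⟨f', hf', rfl, hf''⟩ := hf
  obtain ⟨g', hg', rfl, hg''⟩ := hg
  refine ⟨fun z => f' z * g z + f z * g' z, (hf'.and hg').mono fun z h => h.1.mul h.2, rfl, ?_⟩
  exact ((hf''.mul hg'.self_of_nhds).add (hf'.self_of_nhds.mul hg'')).congr_deriv (by ring)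

theorem pow_two (hf : HasSecondDerivAt f f₁ f₂ x) :
    HasSecondDerivAt (fun z => f z ^ 2) (2 * f x * f₁) (2 * f x * f₂ + 2 * f₁ ^ 2) x := by
  convert hf.mul hf using 1
  · exact funext fun z => sq (f z)
  · ring
  · ring

theorem second_eq_zero (hf : HasSecondDerivAt f f₁ f₂ x) (h : ∀ᶠ z in 𝓝 x, f z = 0) :
    f₂ = 0 := by
  obtain ⟨f', hf', rfl, hf''⟩ := hf
  have hzero : f' =ᶠ[𝓝 x] fun _ => 0 := by
    filter_upwards [hf', h.eventually_nhds] with z hz hz0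
    exact hz.unique ((hasDerivAt_const z 0).congr_of_eventuallyEq hz0)
  exact hf''.unique ((hasDerivAt_const x 0).congr_of_eventuallyEq hzero)

end HasSecondDerivAt

end SecondDeriv

theorem HasDerivAt.eventually_nhdsGT_lt {f g : ℝ → ℝ} {f' g' x : ℝ} (hf : HasDerivAt f f' x)
    (hg : HasDerivAt g g' x) (hfg : f x = g x) (hlt : f' < g') :
    ∀ᶠ z in 𝓝[>] x, f z < g z := by
  have hslope := (hasDerivAt_iff_tendsto_slope.mp (hg.sub hf)).mono_left (nhdsGT_le_nhdsNE x)
  filter_upwards [hslope.eventually (eventually_gt_nhds (sub_pos.2 hlt)), self_mem_nhdsWithin]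
    with z hz hxz
  have h := (slope_pos_iff hxz).1 hz
  rw [Pi.sub_apply, Pi.sub_apply, hfg, sub_self, sub_pos] at h
  exact h

theorem HasDerivAt.eventually_nhdsGT_lt_of_le {f g : ℝ → ℝ} {f' g' x : ℝ}
    (hf : HasDerivAt f f' x) (hg : HasDerivAt g g' x) (hle : f x ≤ g x)
    (hlt : f x = g x → f' < g') : ∀ᶠ z in 𝓝[>] x, f z < g z := by
  rcases hle.lt_or_eq with hfg | hfg
  · exact eventually_nhdsWithin_of_eventually_nhds
      (hf.continuousAt.eventually_lt hg.continuousAt hfg)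
  · exact hf.eventually_nhdsGT_lt hg hfg (hlt hfg)

theorem eventually_nhdsGT_lt_of_hasDerivAt_neg {g g' : ℝ → ℝ} {x : ℝ} (hc : ContinuousAt g x)
    (hg : ∀ᶠ z in 𝓝[>] x, HasDerivAt g (g' z) z ∧ g' z < 0) :
    ∀ᶠ z in 𝓝[>] x, g z < g x := by
  obtain ⟨u, hxu, hu⟩ := mem_nhdsGT_iff_exists_Ioo_subset.1 hg
  have hcont : ContinuousOn g (Ico x u) := by
    rintro z ⟨hxz, hzu⟩
    rcases hxz.lt_or_eq with hxz | rfl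
    · exact (hu ⟨hxz, hzu⟩).1.continuousAt.continuousWithinAt
    · exact hc.continuousWithinAt
  have hanti : StrictAntiOn g (Ico x u) := by
    refine strictAntiOn_of_hasDerivWithinAt_neg (convex_Ico x u) hcont (f' := g') ?_ ?_ <;>
      rw [interior_Ico]
    · exact fun z hz => (hu hz).1.hasDerivWithinAt
    · exact fun z hz => (hu hz).2
  filter_upwards [Ioo_mem_nhdsGT hxu] with z hz
  exact hanti (left_mem_Ico.2 hxu) (Ioo_subset_Ico_self hz) hz.1

theorem exists_forall_Ioo_of_eventually_nhdsGT {p : ℝ → Prop} {x r : ℝ} (hr : 0 < r)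
    (h : ∀ᶠ z in 𝓝[>] x, p z) : ∃ δ, 0 < δ ∧ δ < r ∧ ∀ z ∈ Ioo x (x + δ), p z := by
  obtain ⟨u, hxu, hu⟩ := mem_nhdsGT_iff_exists_Ioo_subset.1 h
  refine ⟨min (u - x) (r / 2), lt_min (sub_pos.2 hxu) (half_pos hr),
    (min_le_right _ _).trans_lt (half_lt_self hr), fun z hz => hu ⟨hz.1, ?_⟩⟩
  linarith [hz.2, min_le_left (u - x) (r / 2)]

namespace LPConds

variable {y : ℝ} {ρ ω : ℝ → ℝ}

theorem deriv_deriv_relations (hlp : LPConds y ρ ω) (hy : y ≠ 0) (hρ : AnalyticAt ℝ ρ 1)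
    (hω : AnalyticAt ℝ ω 1) (hsol : ∀ᶠ z in 𝓝 1, MultSys y ρ ω z) :
    deriv (deriv ρ) 1 * y * (3 - 2 * y) = y ^ 2 - 6 * y + 7 ∧
      2 * deriv (deriv ω) 1 * y * (y - 1) = 16 * y - 9 - 5 * y ^ 2 - deriv (deriv ρ) 1 * y := by
  have hz := hasSecondDerivAt_id (1 : ℝ)
  have hA := (hasSecondDerivAt_const (1 : ℝ) 1).sub
    (((hasSecondDerivAt_const (y ^ 2) 1).mul hz.pow_two).mul hω.hasSecondDerivAt.pow_two)
  have hF := (hρ.deriv.hasSecondDerivAt.mul hA).add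
    (((((hasSecondDerivAt_const (2 * y ^ 2) 1).mul hz).mul hω.hasSecondDerivAt).mul
      hρ.hasSecondDerivAt).mul (hρ.hasSecondDerivAt.sub hω.hasSecondDerivAt))
  have hG := (((hz.mul hω.deriv.hasSecondDerivAt).mul hA).sub
    (((hasSecondDerivAt_const (1 : ℝ) 1).sub
      ((hasSecondDerivAt_const 3 1).mul hω.hasSecondDerivAt)).mul hA)).sub
    ((((hasSecondDerivAt_const (2 * y ^ 2) 1).mul hz.pow_two).mul hω.hasSecondDerivAt.pow_two).mul
      (hρ.hasSecondDerivAt.sub hω.hasSecondDerivAt))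
  -- The third derivatives of `ρ, ω` enter only multiplied by the sonic factor `1 - y²z²ω²`,
  -- which vanishes at `z = 1`.
  have eF := hF.second_eq_zero (hsol.mono fun z hz => hz.1)
  have eG := hG.second_eq_zero (hsol.mono fun z hz => hz.2)
  obtain ⟨h1, h2, h3, h4⟩ := hlp
  simp only [h1, h2, h3, h4] at eF eG
  field_simp at eF eG
  exact ⟨mul_left_cancel₀ (pow_ne_zero 2 hy) (by linear_combination eF / 2),
    mul_left_cancel₀ (pow_ne_zero 2 hy) (by linear_combination -eG / 2)⟩

theorem deriv_deriv_rho_lt (hlp : LPConds y ρ ω) (hy : 3 / 2 < y) (hρ : AnalyticAt ℝ ρ 1)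
    (hω : AnalyticAt ℝ ω 1) (hsol : ∀ᶠ z in 𝓝 1, MultSys y ρ ω z) :
    deriv (deriv ρ) 1 < 2 / y := by
  have hy0 : 0 < y := by linarith
  have hrel := (hlp.deriv_deriv_relations hy0.ne' hρ hω hsol).1
  have hfactor : (deriv (deriv ρ) 1 * y - 2) * (2 * y - 3) = -(y - 1) ^ 2 := by
    linear_combination -hrel
  rw [lt_div_iff₀ hy0]
  nlinarith [pow_pos (show 0 < y - 1 by linarith) 2]

theorem deriv_deriv_omega_pos (hlp : LPConds 2 ρ ω) (hρ : AnalyticAt ℝ ρ 1)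
    (hω : AnalyticAt ℝ ω 1) (hsol : ∀ᶠ z in 𝓝 1, MultSys 2 ρ ω z) :
    0 < deriv (deriv ω) 1 := by
  obtain ⟨hρ₂, hω₂⟩ := hlp.deriv_deriv_relations two_ne_zero hρ hω hsol
  norm_num at hρ₂ hω₂
  linarith

theorem eventually_deriv_rho_neg (hlp : LPConds y ρ ω) (hy : 0 < y) (hρ : AnalyticAt ℝ ρ 1) :
    ∀ᶠ z in 𝓝[>] 1, deriv ρ z < 0 := by
  refine eventually_nhdsWithin_of_eventually_nhds
    (hρ.deriv.continuousAt.eventually_lt continuousAt_const ?_)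
  rw [hlp.2.2.1]
  simpa using hy

theorem eventually_deriv_omega_pos (hlp : LPConds y ρ ω) (hy : 2 ≤ y) (hρ : AnalyticAt ℝ ρ 1)
    (hω : AnalyticAt ℝ ω 1) (hsol : ∀ᶠ z in 𝓝 1, MultSys y ρ ω z) :
    ∀ᶠ z in 𝓝[>] 1, 0 < deriv ω z := by
  have hdω : deriv ω 1 = 1 - 2 / y := hlp.2.2.2
  refine (hasDerivAt_const 1 0).eventually_nhdsGT_lt_of_le hω.deriv.differentiableAt.hasDerivAt
    ?_ fun h => ?_
  · rw [hdω, sub_nonneg, div_le_one (by linarith)]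
    exact hy
  · obtain rfl : y = 2 := by
      have h2y : 2 / y = 1 := by linarith
      exact ((div_eq_one_iff_eq (by linarith)).1 h2y).symm
    exact hlp.deriv_deriv_omega_pos hρ hω hsol

theorem eventually_omega_mem_Ioo (hlp : LPConds y ρ ω) (hy : y ∈ Icc 2 3)
    (hω : AnalyticAt ℝ ω 1) : ∀ᶠ z in 𝓝[>] 1, ω z ∈ Ioo (1 / 3) 1 := by
  obtain ⟨hy2, hy3⟩ := hy
  obtain ⟨-, hω1, -, hdω⟩ := hlp
  have hlower : ∀ᶠ z in 𝓝[>] 1, 1 / 3 < ω z := by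
    refine (hasDerivAt_const 1 (1 / 3)).eventually_nhdsGT_lt_of_le
      hω.differentiableAt.hasDerivAt ?_ fun h => ?_
    · rw [hω1]
      exact one_div_le_one_div_of_le (by linarith) hy3
    · obtain rfl : y = 3 := by
        rw [hω1] at h
        simpa using h.symm
      norm_num [hdω]
  have hupper : ∀ᶠ z in 𝓝[>] 1, ω z < 1 := by
    refine eventually_nhdsWithin_of_eventually_nhds
      (hω.continuousAt.eventually_lt continuousAt_const ?_)
    rw [hω1]
    exact (div_lt_one (by linarith)).2 (by linarith)
  exact hlower.and hupper

theorem eventually_neg_two_mul_rho_div_lt_deriv_rho (hlp : LPConds y ρ ω) (hy : 0 < y)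
    (hρ : AnalyticAt ℝ ρ 1) : ∀ᶠ z in 𝓝[>] 1, -2 * ρ z / z < deriv ρ z := by
  obtain ⟨hρ1, -, hdρ, -⟩ := hlp
  refine eventually_nhdsWithin_of_eventually_nhds
    ((show ContinuousAt (fun z => -2 * ρ z / z) 1 from
      (continuousAt_const.mul hρ.continuousAt).div continuousAt_id one_ne_zero).eventually_lt
      hρ.deriv.continuousAt ?_)
  rw [hρ1, hdρ, div_one]
  linarith [one_div_pos.2 hy]

theorem eventually_one_div_mul_lt_omega (hlp : LPConds y ρ ω) (hy : 1 < y)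
    (hω : AnalyticAt ℝ ω 1) : ∀ᶠ z in 𝓝[>] 1, 1 / (y * z) < ω z := by
  obtain ⟨-, hω1, -, hdω⟩ := hlp
  have hy0 : y ≠ 0 := by positivity
  refine ((hasDerivAt_const 1 (1 : ℝ)).fun_div ((hasDerivAt_id' 1).const_mul y) (by simpa using hy0)
    ).eventually_nhdsGT_lt hω.differentiableAt.hasDerivAt (by simp [hω1]) ?_
  rw [hdω]
  field_simp
  linarith

theorem eventually_rho_add_mul_deriv_rho_neg (hlp : LPConds y ρ ω) (hy : 3 / 2 < y)
    (hρ : AnalyticAt ℝ ρ 1) (hω : AnalyticAt ℝ ω 1) (hsol : ∀ᶠ z in 𝓝 1, MultSys y ρ ω z) :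
    ∀ᶠ z in 𝓝[>] 1, ρ z + z * deriv ρ z < 0 := by
  have hρ₂ := hlp.deriv_deriv_rho_lt hy hρ hω hsol
  obtain ⟨hρ1, -, hdρ, -⟩ := hlp
  refine (hρ.differentiableAt.hasDerivAt.add ((hasDerivAt_id' 1).mul
    hρ.deriv.differentiableAt.hasDerivAt)).eventually_nhdsGT_lt (hasDerivAt_const 1 0)
    (by simp [hρ1, hdρ]) ?_
  rw [hdρ]
  linarith [show 2 / y = 2 * (1 / y) by ring]

theorem eventually_mul_rho_lt (hlp : LPConds y ρ ω) (hy : 3 / 2 < y)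
    (hρ : AnalyticAt ℝ ρ 1) (hω : AnalyticAt ℝ ω 1) (hsol : ∀ᶠ z in 𝓝 1, MultSys y ρ ω z) :
    ∀ᶠ z in 𝓝[>] 1, z * ρ z < 1 / y := by
  have hderiv : ∀ᶠ z in 𝓝[>] 1, HasDerivAt (fun z => z * ρ z) (ρ z + z * deriv ρ z) z := by
    refine eventually_nhdsWithin_of_eventually_nhds (hρ.eventually_analyticAt.mono fun z hz => ?_)
    exact ((hasDerivAt_id' z).mul hz.differentiableAt.hasDerivAt).congr_deriv (by simp)
  have h := eventually_nhdsGT_lt_of_hasDerivAt_neg (continuousAt_id.mul hρ.continuousAt)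
    (hderiv.and (hlp.eventually_rho_add_mul_deriv_rho_neg hy hρ hω hsol))
  simpa [hlp.1] using h

theorem eventually_one_div_sq_lt_rho_mul_omega (hlp : LPConds y ρ ω) (hy : 1 < y)
    (hρ : AnalyticAt ℝ ρ 1) (hω : AnalyticAt ℝ ω 1) :
    ∀ᶠ z in 𝓝[>] 1, 1 / (y * z) ^ 2 < ρ z * ω z := by
  obtain ⟨hρ1, hω1, hdρ, hdω⟩ := hlp
  have hy0 : y ≠ 0 := by positivity
  refine ((hasDerivAt_const 1 (1 : ℝ)).fun_div (((hasDerivAt_id' 1).const_mul y).fun_pow 2)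
    (by simpa using hy0)).eventually_nhdsGT_lt
    (hρ.differentiableAt.hasDerivAt.mul hω.differentiableAt.hasDerivAt) (by rw [hρ1, hω1]; ring) ?_
  rw [hρ1, hω1, hdρ, hdω]
  field_simp
  norm_num
  nlinarith

end LPConds

/-- Initialisation: qualitative properties of the LP-type solution just to the right
of the sonic point `z = 1`. -/
theorem initialisation_right_of_sonic_point
    (y : ℝ) (hy : y ∈ Set.Icc (2 : ℝ) 3)
    (r : ℝ) (hr : r ∈ Set.Ioo (0 : ℝ) 1)
    (ρ ω : ℝ → ℝ)
    (hρa : AnalyticOnNhd ℝ ρ (Set.Ioo (1 - r) (1 + r)))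
    (hωa : AnalyticOnNhd ℝ ω (Set.Ioo (1 - r) (1 + r)))
    (hsol : ∀ z ∈ Set.Ioo (1 - r) (1 + r), MultSys y ρ ω z)
    (hlp : LPConds y ρ ω) :
    ∃ δ : ℝ, 0 < δ ∧ δ < r ∧ ∀ z ∈ Set.Ioo (1 : ℝ) (1 + δ),
      deriv ρ z < 0 ∧
      0 < deriv ω z ∧
      (1 / 3 < ω z ∧ ω z < 1) ∧
      (-2 * ρ z / z < deriv ρ z ∧ deriv ρ z < -(ρ z) / z) ∧
      1 / (y * z) < ω z ∧
      ρ z < 1 / (y * z) ∧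
      1 / (y * z) ^ 2 < ρ z * ω z := by
  have hy0 : 0 < y := by linarith [hy.1]
  have h1 : (1 : ℝ) ∈ Ioo (1 - r) (1 + r) := ⟨by linarith [hr.1], by linarith [hr.1]⟩
  have hρ := hρa 1 h1
  have hω := hωa 1 h1
  have hsol₁ : ∀ᶠ z in 𝓝 1, MultSys y ρ ω z := eventually_of_mem (isOpen_Ioo.mem_nhds h1) hsol
  have hy₁ : 3 / 2 < y := by linarith [hy.1]
  refine exists_forall_Ioo_of_eventually_nhdsGT hr.1 ?_
  filter_upwards [hlp.eventually_deriv_rho_neg hy0 hρ,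
    hlp.eventually_deriv_omega_pos hy.1 hρ hω hsol₁, hlp.eventually_omega_mem_Ioo hy hω,
    hlp.eventually_neg_two_mul_rho_div_lt_deriv_rho hy0 hρ,
    hlp.eventually_rho_add_mul_deriv_rho_neg hy₁ hρ hω hsol₁,
    hlp.eventually_one_div_mul_lt_omega (by linarith) hω,
    hlp.eventually_mul_rho_lt hy₁ hρ hω hsol₁,
    hlp.eventually_one_div_sq_lt_rho_mul_omega (by linarith) hρ hω, self_mem_nhdsWithin]
    with z hdρ hdω hωz hρ_lower hzρ' hωz' hzρ hρω (hz : 1 < z)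
  have hz0 : 0 < z := by linarith
  refine ⟨hdρ, hdω, hωz, ⟨hρ_lower, ?_⟩, hωz', ?_, hρω⟩
  · rw [lt_div_iff₀ hz0]
    linarith
  · rw [lt_div_iff₀ (by positivity)]
    have := (lt_div_iff₀ hy0).1 hzρ
    linarith
end
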